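/- arXiv:2305.03100 — 4 statements merged into one kernel-verified Lean document; each statement's English description precedes it below -/
import Mathlib

section
/- Orthogonality of synergy projections: if Φ_T is a pure interaction function of T (i.e., Φ_T(x) = 0 whenever x_i = x'_i for some i ∈ T, and Φ_T depends only on coordinates in T), then φ_S(Φ_T) = 0 whenever S ≠ T. -/
/-!
If some `i ∈ T` lies outside `S`, every point `x_W` with `W ⊆ S` has its `i`-th coordinate at
the baseline, so every term of `φ_S(Φ)` vanishes. Otherwise some `j ∈ S` lies outside `T`;
then `Φ` does not see coordinate `j`, and the terms for `W` and `W ∪ {j}` cancel in pairs.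
-/

open Finset

/-- `splice x x' T` agrees with `x` on coordinates in `T` and with the baseline `x'` elsewhere. -/
def splice {n : ℕ} (x x' : Fin n → ℝ) (T : Finset (Fin n)) : Fin n → ℝ :=
  fun i => if i ∈ T then x i else x' i

/-- The synergy function `φ_S(F)(x)` with baseline `x'`. -/
noncomputable def synergy {n : ℕ} (x' : Fin n → ℝ) (S : Finset (Fin n))
    (F : (Fin n → ℝ) → ℝ) (x : Fin n → ℝ) : ℝ :=
  ∑ T ∈ S.powerset, (-1 : ℝ) ^ (S.card - T.card) * F (splice x x' T)


/-- `Φ` is a pure interaction function of the group `T` (with baseline `x'`):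
it vanishes whenever some coordinate in `T` is at the baseline, and it does not
depend on coordinates outside `T`. -/
def PureInteraction {n : ℕ} (x' : Fin n → ℝ) (T : Finset (Fin n))
    (Φ : (Fin n → ℝ) → ℝ) : Prop :=
  (∀ x : Fin n → ℝ, (∃ i ∈ T, x i = x' i) → Φ x = 0) ∧
  (∀ y z : Fin n → ℝ, (∀ i ∈ T, y i = z i) → Φ y = Φ z)

theorem splice_apply_of_notMem {n : ℕ} (x x' : Fin n → ℝ) {W : Finset (Fin n)} {i : Fin n}
    (hi : i ∉ W) : splice x x' W i = x' i :=
  if_neg hi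

theorem splice_insert_apply_of_ne {n : ℕ} (x x' : Fin n → ℝ) (W : Finset (Fin n))
    {i j : Fin n} (hij : i ≠ j) : splice x x' (insert j W) i = splice x x' W i := by
  simp only [splice, mem_insert, hij, false_or]

theorem synergy_insert {n : ℕ} (x' : Fin n → ℝ) {S : Finset (Fin n)} {j : Fin n} (hj : j ∉ S)
    (F : (Fin n → ℝ) → ℝ) (x : Fin n → ℝ) :
    synergy x' (insert j S) F x = ∑ W ∈ S.powerset,
      (-1 : ℝ) ^ (S.card - W.card) * (F (splice x x' (insert j W)) - F (splice x x' W)) := by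
  rw [synergy, sum_powerset_insert hj, ← sum_add_distrib]
  refine sum_congr rfl fun W hW => ?_
  have hWS : W ⊆ S := mem_powerset.mp hW
  have hjW : j ∉ W := fun h => hj (hWS h)
  have hsign : (-1 : ℝ) ^ (S.card + 1 - W.card) = -(-1) ^ (S.card - W.card) := by
    rw [Nat.sub_add_comm (card_le_card hWS), pow_succ, mul_neg_one]
  rw [card_insert_of_notMem hj, card_insert_of_notMem hjW, Nat.add_sub_add_right, hsign]
  ring

theorem synergy_eq_zero_of_dependsOn_compl {n : ℕ} (x' : Fin n → ℝ) {S : Finset (Fin n)}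
    {j : Fin n} (hj : j ∈ S) {F : (Fin n → ℝ) → ℝ} (hF : DependsOn F {j}ᶜ) (x : Fin n → ℝ) :
    synergy x' S F x = 0 := by
  rw [← insert_erase hj, synergy_insert x' (notMem_erase j S)]
  refine sum_eq_zero fun W _ => ?_
  rw [hF fun i hi => splice_insert_apply_of_ne x x' W hi, sub_self, mul_zero]

theorem synergy_eq_zero_of_eq_zero_at_baseline {n : ℕ} (x' : Fin n → ℝ) {S : Finset (Fin n)}
    {i : Fin n} (hi : i ∉ S) {F : (Fin n → ℝ) → ℝ} (hF : ∀ y, y i = x' i → F y = 0)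
    (x : Fin n → ℝ) : synergy x' S F x = 0 :=
  sum_eq_zero fun W hW => by
    rw [hF _ (splice_apply_of_notMem x x' fun h => hi (mem_powerset.mp hW h)), mul_zero]

theorem synergy_orthogonal {n : ℕ} (x' : Fin n → ℝ) (S T : Finset (Fin n))
    (Φ : (Fin n → ℝ) → ℝ) (hΦ : PureInteraction x' T Φ) (hST : S ≠ T) :
    ∀ x, synergy x' S Φ x = 0 := by
  obtain ⟨hvanish, hdepends⟩ := hΦ
  by_cases hTS : T ⊆ S
  · obtain ⟨j, hjS, hjT⟩ := not_subset.mp fun hST' => hST (hST'.antisymm hTS)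
    have hΦT : DependsOn Φ (T : Set (Fin n)) := fun y z h => hdepends y z h
    exact synergy_eq_zero_of_dependsOn_compl x' hjS
      (hΦT.mono (Set.subset_compl_singleton_iff.mpr hjT))
  · obtain ⟨i, hiT, hiS⟩ := not_subset.mp hTS
    exact synergy_eq_zero_of_eq_zero_at_baseline x' hiS fun y hy => hvanish y ⟨i, hiT, hy⟩
end

section
/- Uniqueness of synergy decomposition: if F = \sum_{S ∈ P1} Φ^1_S = \sum_{S ∈ P2} Φ^2_S are two decompositions of F into nonzero pure interaction functions on distinct groups (with P1, P2 ⊆ powerset of N), then apart from possible zero constant terms indexed by ∅, P1 = P2 and Φ^1_S = Φ^2_S for all S. -/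
open Finset

/-!
Möbius inversion on the Boolean lattice of coordinate sets: a pure interaction function `Φ` of a
group `T` evaluated at `splice x x' U` equals `Φ x` if `T ⊆ U` and vanishes otherwise, so the
alternating sum defining `φ_S(Φ)` collapses to `∑_{T ⊆ U ⊆ S} (-1)^{|S \ U|} Φ x`, which is `Φ x`
for `S = T` and `0` otherwise. By linearity `φ_S(∑_{T ∈ P} Φ_T) = Φ_S` for `S ∈ P` and `0` for
`S ∉ P`, so both the index set and the components of a decomposition with nonzero components are
read off from `F` alone.
-/

theorem Finset.sum_Icc_neg_one_pow_card_sdiff {α R : Type*} [DecidableEq α] [Ring R]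
    (T S : Finset α) :
    ∑ U ∈ Icc T S, (-1 : R) ^ #(S \ U) = if S = T then 1 else 0 := by
  by_cases hTS : T ⊆ S
  · have hcompl :
        ∑ U ∈ Icc T S, (-1 : R) ^ #(S \ U) = ∑ V ∈ (S \ T).powerset, (-1 : R) ^ #V := by
      refine sum_nbij' (S \ ·) (S \ ·) (fun U hU => ?_) (fun V hV => ?_) (fun U hU => ?_)
        (fun V hV => ?_) (fun _ _ => rfl)
      · rw [mem_Icc] at hU
        exact mem_powerset.2 (sdiff_subset_sdiff le_rfl hU.1)
      · rw [mem_powerset, subset_sdiff] at hV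
        exact mem_Icc.2 ⟨subset_sdiff.2 ⟨hTS, hV.2.symm⟩, sdiff_subset⟩
      · exact sdiff_sdiff_eq_self (mem_Icc.1 hU).2
      · exact sdiff_sdiff_eq_self ((mem_powerset.1 hV).trans sdiff_subset)
    have hS : S \ T = ∅ ↔ S = T := by
      rw [sdiff_eq_empty_iff_subset]
      exact ⟨fun h => h.antisymm hTS, fun h => h.le⟩
    rw [hcompl, ← if_congr hS rfl rfl]
    have h := congrArg (Int.cast : ℤ → R) (sum_powerset_neg_one_pow_card (x := S \ T))
    push_cast at h
    exact h
  · rw [Icc_eq_empty hTS, sum_empty, if_neg]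
    rintro rfl
    exact hTS le_rfl

section Synergy

variable {n : ℕ} {x' : Fin n → ℝ}

theorem synergy_sum {ι : Type*} (P : Finset ι) (Φ : ι → (Fin n → ℝ) → ℝ)
    (S : Finset (Fin n)) (x : Fin n → ℝ) :
    synergy x' S (fun y => ∑ T ∈ P, Φ T y) x = ∑ T ∈ P, synergy x' S (Φ T) x := by
  simp only [synergy, mul_sum]
  exact sum_comm

namespace PureInteraction

variable {T : Finset (Fin n)} {Φ : (Fin n → ℝ) → ℝ}

theorem apply_splice_of_subset (hΦ : PureInteraction x' T Φ) (x : Fin n → ℝ)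
    {U : Finset (Fin n)} (hTU : T ⊆ U) : Φ (splice x x' U) = Φ x :=
  hΦ.2 _ _ fun _ hi => if_pos (hTU hi)

theorem apply_splice_of_not_subset (hΦ : PureInteraction x' T Φ) (x : Fin n → ℝ)
    {U : Finset (Fin n)} (hTU : ¬T ⊆ U) : Φ (splice x x' U) = 0 := by
  obtain ⟨i, hiT, hiU⟩ := not_subset.1 hTU
  exact hΦ.1 _ ⟨i, hiT, if_neg hiU⟩

theorem synergy_eq (hΦ : PureInteraction x' T Φ) (S : Finset (Fin n)) (x : Fin n → ℝ) :
    synergy x' S Φ x = if S = T then Φ x else 0 := by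
  have hterm : ∀ U ∈ S.powerset, (-1 : ℝ) ^ (#S - #U) * Φ (splice x x' U) =
      if T ⊆ U then (-1 : ℝ) ^ #(S \ U) * Φ x else 0 := by
    intro U hU
    split_ifs with hTU
    · rw [hΦ.apply_splice_of_subset x hTU, card_sdiff_of_subset (mem_powerset.1 hU)]
    · rw [hΦ.apply_splice_of_not_subset x hTU, mul_zero]
  rw [synergy, sum_congr rfl hterm, ← sum_filter, ← Icc_eq_filter_powerset, ← sum_mul,
    sum_Icc_neg_one_pow_card_sdiff, ite_mul, one_mul, zero_mul]

end PureInteraction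

variable {P : Finset (Finset (Fin n))} {Φ : Finset (Fin n) → (Fin n → ℝ) → ℝ}

theorem synergy_sum_pureInteraction (hP : ∀ T ∈ P, PureInteraction x' T (Φ T))
    (S : Finset (Fin n)) (x : Fin n → ℝ) :
    synergy x' S (fun y => ∑ T ∈ P, Φ T y) x = if S ∈ P then Φ S x else 0 := by
  rw [synergy_sum, sum_congr rfl fun T hT => (hP T hT).synergy_eq S x, sum_ite_eq]

theorem synergy_sum_pureInteraction_of_mem (hP : ∀ T ∈ P, PureInteraction x' T (Φ T))
    {S : Finset (Fin n)} (hS : S ∈ P) (x : Fin n → ℝ) :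
    synergy x' S (fun y => ∑ T ∈ P, Φ T y) x = Φ S x := by
  rw [synergy_sum_pureInteraction hP, if_pos hS]

theorem mem_iff_exists_synergy_sum_ne_zero
    (hP : ∀ T ∈ P, PureInteraction x' T (Φ T) ∧ ∃ x, Φ T x ≠ 0) (S : Finset (Fin n)) :
    S ∈ P ↔ ∃ x, synergy x' S (fun y => ∑ T ∈ P, Φ T y) x ≠ 0 := by
  simp only [synergy_sum_pureInteraction fun T hT => (hP T hT).1]
  by_cases hS : S ∈ P
  · simpa [hS] using (hP S hS).2
  · simp [hS]

end Synergy

theorem synergy_decomposition_unique {n : ℕ} (x' : Fin n → ℝ) (F : (Fin n → ℝ) → ℝ)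
    (P1 P2 : Finset (Finset (Fin n)))
    (Φ1 Φ2 : Finset (Fin n) → (Fin n → ℝ) → ℝ)
    (h1 : ∀ S ∈ P1, PureInteraction x' S (Φ1 S) ∧ ∃ x, Φ1 S x ≠ 0)
    (h2 : ∀ S ∈ P2, PureInteraction x' S (Φ2 S) ∧ ∃ x, Φ2 S x ≠ 0)
    (hF1 : ∀ x, F x = ∑ S ∈ P1, Φ1 S x)
    (hF2 : ∀ x, F x = ∑ S ∈ P2, Φ2 S x) :
    P1 \ {∅} = P2 \ {∅} ∧ ∀ S ∈ P1, S ≠ ∅ → Φ1 S = Φ2 S := by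
  have hF : (fun y => ∑ S ∈ P1, Φ1 S y) = fun y => ∑ S ∈ P2, Φ2 S y :=
    funext fun y => (hF1 y).symm.trans (hF2 y)
  have hP : P1 = P2 := by
    ext S
    rw [mem_iff_exists_synergy_sum_ne_zero h1, hF, mem_iff_exists_synergy_sum_ne_zero h2]
  refine ⟨by rw [hP], fun S hS _ => funext fun x => ?_⟩
  rw [← synergy_sum_pureInteraction_of_mem (fun T hT => (h1 T hT).1) hS, hF,
    synergy_sum_pureInteraction_of_mem (fun T hT => (h2 T hT).1) (hP ▸ hS)]
end

section
/- Integrated Gradients on a centered monomial: for x' = 0, m ∈ ℕ^n with m_i > 0, and F(y) = y^m = \prod_j y_j^{m_j}, the Integrated Gradient IG_i(x,F) = x_i ∫_0^1 (∂F/∂x_i)(t x) dt equals (m_i / ‖m‖_1) x^m, where ‖m‖_1 = \sum_j m_j. -/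
/-!
The partial derivative `∂ᵢ(yᵐ) = mᵢ yᵢ^(mᵢ-1) ∏_{j≠i} y_j^{m_j}` is homogeneous of degree
`‖m‖₁ - 1`, so the integrand of `IGᵢ` is `t^(‖m‖₁-1) ∂ᵢ(xᵐ)` and integrates to `∂ᵢ(xᵐ) / ‖m‖₁`;
Euler's identity `xᵢ ∂ᵢ(xᵐ) = mᵢ xᵐ` finishes the computation.
-/

open Finset

/-- Integrated Gradients of feature `i` with baseline `0`:
`IG_i(x,F) = x_i ∫_0^1 (∂F/∂x_i)(t • x) dt`, where the partial derivative in
coordinate `i` is expressed as the derivative in the `i`-th slot. -/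
noncomputable def ig {n : ℕ} (F : (Fin n → ℝ) → ℝ) (i : Fin n) (x : Fin n → ℝ) : ℝ :=
  x i * ∫ t in (0:ℝ)..1, deriv (fun s : ℝ => F (Function.update (t • x) i s)) ((t • x) i)

section Monomial

variable {ι : Type*} [Fintype ι] [DecidableEq ι]

noncomputable def partialDeriv (F : (ι → ℝ) → ℝ) (i : ι) (y : ι → ℝ) : ℝ :=
  deriv (fun s : ℝ => F (Function.update y i s)) (y i)

theorem ig_eq_integral_partialDeriv {n : ℕ} (F : (Fin n → ℝ) → ℝ) (i : Fin n) (x : Fin n → ℝ) :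
    ig F i x = x i * ∫ t in (0:ℝ)..1, partialDeriv F i (t • x) :=
  rfl

theorem prod_update_pow (m : ι → ℕ) (i : ι) (y : ι → ℝ) (s : ℝ) :
    ∏ j, Function.update y i s j ^ m j = s ^ m i * ∏ j ∈ univ.erase i, y j ^ m j := by
  rw [← mul_prod_erase univ _ (mem_univ i), Function.update_self]
  congr 1
  exact prod_congr rfl fun j hj => by rw [Function.update_of_ne (ne_of_mem_erase hj)]

theorem partialDeriv_monomial (m : ι → ℕ) (i : ι) (y : ι → ℝ) :
    partialDeriv (fun y => ∏ j, y j ^ m j) i y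
      = m i * y i ^ (m i - 1) * ∏ j ∈ univ.erase i, y j ^ m j := by
  simp only [partialDeriv, prod_update_pow, deriv_mul_const_field', deriv_pow_field]

theorem mul_partialDeriv_monomial (m : ι → ℕ) (i : ι) (y : ι → ℝ) :
    y i * partialDeriv (fun y => ∏ j, y j ^ m j) i y = m i * ∏ j, y j ^ m j := by
  rw [partialDeriv_monomial, ← mul_prod_erase univ _ (mem_univ i)]
  rcases eq_or_ne (m i) 0 with h | h
  · simp [h]
  · rw [← mul_pow_sub_one h (y i)]
    ring

theorem partialDeriv_monomial_smul (m : ι → ℕ) (i : ι) (t : ℝ) (y : ι → ℝ) :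
    partialDeriv (fun y => ∏ j, y j ^ m j) i (t • y)
      = t ^ (∑ j, m j - 1) * partialDeriv (fun y => ∏ j, y j ^ m j) i y := by
  simp only [partialDeriv_monomial, Pi.smul_apply, smul_eq_mul, mul_pow, prod_mul_distrib,
    prod_pow_eq_pow_sum]
  rcases eq_or_ne (m i) 0 with h | h
  · simp [h]
  · have hdeg : ∑ j, m j - 1 = m i - 1 + ∑ j ∈ univ.erase i, m j := by
      rw [← add_sum_erase univ m (mem_univ i)]
      omega
    rw [hdeg, pow_add]
    ring

end Monomial

theorem integral_pow_sub_one_of_ne_zero {k : ℕ} (hk : k ≠ 0) :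
    ∫ t in (0:ℝ)..1, t ^ (k - 1) = 1 / k := by
  obtain ⟨k, rfl⟩ := Nat.exists_eq_add_one_of_ne_zero hk
  simp [integral_pow]

theorem ig_monomial {n : ℕ} (m : Fin n → ℕ) (i : Fin n) (hmi : 0 < m i) (x : Fin n → ℝ) :
    ig (fun y => ∏ j, y j ^ m j) i x
      = ((m i : ℝ) / (∑ j, (m j : ℝ))) * ∏ j, x j ^ m j := by
  have hdeg : ∑ j, m j ≠ 0 := (hmi.trans_le (single_le_sum (by simp) (mem_univ i))).ne'
  calc ig (fun y => ∏ j, y j ^ m j) i x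
      = x i * ∫ t in (0:ℝ)..1,
          t ^ (∑ j, m j - 1) * partialDeriv (fun y => ∏ j, y j ^ m j) i x := by
        simp only [ig_eq_integral_partialDeriv, partialDeriv_monomial_smul]
    _ = (∫ t in (0:ℝ)..1, t ^ (∑ j, m j - 1))
          * (x i * partialDeriv (fun y => ∏ j, y j ^ m j) i x) := by
        rw [intervalIntegral.integral_mul_const]
        ring
    _ = ((m i : ℝ) / (∑ j, (m j : ℝ))) * ∏ j, x j ^ m j := by
        rw [mul_partialDeriv_monomial, integral_pow_sub_one_of_ne_zero hdeg]
        push_cast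
        ring
end

section
/- Uniqueness of the full-order interaction: any map I assigning to each function F : ℝ^n → ℝ (with fixed x, x' ∈ ℝ^n) a vector (I_S(F))_{S ⊆ N} satisfying (1) completeness: \sum_{S ≠ ∅} I_S(F) = F(x) − F(x'); (2) null feature: I_S(F) = 0 whenever F does not depend on some coordinate i ∈ S; (3) linearity of zero-valued functions: I_S(G) = 0 implies I_S(F + G) = I_S(F); and (4) baseline test: I_S(F) = 0 whenever y ↦ F(y_S) is constant — must equal the synergy function, i.e., I_S(F) = \sum_{T ⊆ S} (-1)^{|S|-|T|} F(x_T) for all nonempty S. -/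
/-!
Three reductions, each changing the argument of `I _ S` by a function on which `I _ S` vanishes.
First, `F` and `y ↦ F (y_S)` differ by a function vanishing on all points `y_S`, so the baseline
test applies. Second, `y ↦ F (y_S)` differs from the synergy `φ_S F` by a combination of the
`y ↦ F (y_T)` with `T ⊊ S`, each ignoring a coordinate of `S`. Finally, completeness applied to
`φ_S F` isolates `I_S (φ_S F)`: for `T ≠ S`, either `S ⊈ T` and `φ_S F` vanishes at every
`y_T`, or `S ⊊ T` and `φ_S F` ignores a coordinate of `T \ S`; and `φ_S F (x') = 0`.
-/

open Finset

lemma Finset.sum_powerset_neg_one_pow_mul_eq_zero {α R : Type*} [DecidableEq α] [CommRing R]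
    {S : Finset α} {i : α} (hi : i ∈ S) (g : Finset α → R)
    (hg : ∀ V, i ∉ V → g (insert i V) = g V) :
    ∑ V ∈ S.powerset, (-1 : R) ^ (S.card - V.card) * g V = 0 := by
  rw [← insert_erase hi, sum_powerset_insert (notMem_erase i S), ← sum_add_distrib]
  refine sum_eq_zero fun V hV => ?_
  have hiV : i ∉ V := fun h => notMem_erase i S (mem_powerset.1 hV h)
  have hcard : V.card < (S.erase i).card + 1 :=
    Nat.lt_succ_of_le (card_le_card (mem_powerset.1 hV))
  rw [hg V hiV, card_insert_of_notMem (notMem_erase i S), card_insert_of_notMem hiV,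
    Nat.succ_sub_succ, Nat.succ_sub (Nat.le_of_lt_succ hcard), pow_succ]
  ring

section Splice

variable {n : ℕ}

lemma splice_splice (y x' : Fin n → ℝ) (W V : Finset (Fin n)) :
    splice (splice y x' W) x' V = splice y x' (V ∩ W) := by
  funext i
  by_cases hV : i ∈ V <;> by_cases hW : i ∈ W <;> simp [splice, hV, hW]

lemma splice_empty (y x' : Fin n → ℝ) : splice y x' ∅ = x' := by
  funext i
  simp [splice]

lemma splice_congr {y z x' : Fin n → ℝ} {V : Finset (Fin n)} {i : Fin n} (hiV : i ∉ V)
    (hyz : ∀ j, j ≠ i → y j = z j) : splice y x' V = splice z x' V := by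
  funext j
  by_cases hj : j ∈ V
  · simp only [splice, hj, if_true]
    exact hyz j (ne_of_mem_of_not_mem hj hiV)
  · simp [splice, hj]

end Splice

section Synergy

variable {n : ℕ} (x' : Fin n → ℝ) (F : (Fin n → ℝ) → ℝ) {S : Finset (Fin n)}

lemma synergy_splice_eq_zero (y : Fin n → ℝ) {W : Finset (Fin n)} (hSW : ¬ S ⊆ W) :
    synergy x' S F (splice y x' W) = 0 := by
  obtain ⟨i, hiS, hiW⟩ := not_subset.1 hSW
  simp only [synergy, splice_splice]
  exact sum_powerset_neg_one_pow_mul_eq_zero hiS _ fun V _ => by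
    rw [insert_inter_of_notMem hiW]

lemma synergy_baseline_eq_zero (hS : S ≠ ∅) : synergy x' S F x' = 0 := by
  simpa [splice_empty] using
    synergy_splice_eq_zero x' F x' (W := ∅) (by simpa [subset_empty] using hS)

lemma synergy_congr {i : Fin n} (hiS : i ∉ S) {y z : Fin n → ℝ}
    (hyz : ∀ j, j ≠ i → y j = z j) : synergy x' S F y = synergy x' S F z :=
  sum_congr rfl fun V hV => by
    rw [splice_congr (fun h => hiS (mem_powerset.1 hV h)) hyz]

lemma synergy_sub_comp_splice (S : Finset (Fin n)) :
    synergy x' S F - (fun y => F (splice y x' S)) =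
      ∑ V ∈ S.powerset.erase S, fun y => (-1 : ℝ) ^ (S.card - V.card) * F (splice y x' V) := by
  funext y
  rw [Pi.sub_apply, Finset.sum_apply, synergy, ← add_sum_erase _ _ (mem_powerset_self S)]
  simp

end Synergy

section Vanishing

variable {M N : Type*} [Zero N] {J : M → N}

lemma apply_sum_eq_zero [AddCommMonoid M] (hJ : ∀ F G, J G = 0 → J (F + G) = J F)
    (hJ0 : J 0 = 0) {ι : Type*} (A : Finset ι) (f : ι → M) (hf : ∀ i ∈ A, J (f i) = 0) :
    J (∑ i ∈ A, f i) = 0 :=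
  sum_induction f (fun G => J G = 0) (fun F G hF hG => (hJ F G hG).trans hF) hJ0 hf

lemma apply_eq_of_apply_sub_eq_zero [AddCommGroup M] (hJ : ∀ F G, J G = 0 → J (F + G) = J F)
    {F G : M} (h : J (F - G) = 0) : J F = J G := by
  simpa using hJ G (F - G) h

end Vanishing

theorem full_order_interaction_unique {n : ℕ} (x x' : Fin n → ℝ)
    (I : ((Fin n → ℝ) → ℝ) → Finset (Fin n) → ℝ)
    (hcomplete : ∀ F : (Fin n → ℝ) → ℝ,
      ∑ S ∈ (Finset.univ : Finset (Fin n)).powerset.filter (fun S => S ≠ ∅), I F S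
        = F x - F x')
    (hnull : ∀ (F : (Fin n → ℝ) → ℝ) (S : Finset (Fin n)) (i : Fin n), i ∈ S →
      (∀ y z : Fin n → ℝ, (∀ j, j ≠ i → y j = z j) → F y = F z) → I F S = 0)
    (hlinzero : ∀ (F G : (Fin n → ℝ) → ℝ) (S : Finset (Fin n)),
      I G S = 0 → I (fun y => F y + G y) S = I F S)
    (hbaseline : ∀ (F : (Fin n → ℝ) → ℝ) (S : Finset (Fin n)),
      (∀ y z : Fin n → ℝ, F (splice y x' S) = F (splice z x' S)) → I F S = 0) :
    ∀ (F : (Fin n → ℝ) → ℝ) (S : Finset (Fin n)), S ≠ ∅ →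
      I F S = synergy x' S F x := by
  intro F S hS
  have hJ : ∀ F G, I G S = 0 → I (F + G) S = I F S := fun F G => hlinzero F G S
  have splice_step : I F S = I (fun y => F (splice y x' S)) S :=
    apply_eq_of_apply_sub_eq_zero hJ <| hbaseline _ S fun y z => by simp [splice_splice]
  have synergy_step : I (synergy x' S F) S = I (fun y => F (splice y x' S)) S := by
    refine apply_eq_of_apply_sub_eq_zero hJ ?_
    rw [synergy_sub_comp_splice]
    refine apply_sum_eq_zero hJ (hbaseline 0 S fun _ _ => rfl) _ _ fun V hV => ?_
    obtain ⟨hVS, hV⟩ := mem_erase.1 hV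
    obtain ⟨i, hiS, hiV⟩ := exists_of_ssubset ((mem_powerset.1 hV).ssubset_of_ne hVS)
    exact hnull _ S i hiS fun y z hyz => by simp only [splice_congr hiV hyz]
  have other_vanish : ∀ T, T ≠ S → I (synergy x' S F) T = 0 := by
    intro T hTS
    by_cases hST : S ⊆ T
    · obtain ⟨i, hiT, hiS⟩ := exists_of_ssubset (hST.ssubset_of_ne hTS.symm)
      exact hnull _ T i hiT fun y z => synergy_congr x' F hiS
    · exact hbaseline _ T fun y z => by
        rw [synergy_splice_eq_zero x' F y hST, synergy_splice_eq_zero x' F z hST]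
  have completeness := hcomplete (synergy x' S F)
  rw [sum_eq_single_of_mem S (by simpa using hS) fun T _ => other_vanish T,
    synergy_baseline_eq_zero x' F hS, sub_zero] at completeness
  rw [splice_step, ← synergy_step, completeness]
end
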